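/- Let X be a set, F a countable family of functions from X to [a,b] with a < b, P a probability measure, and X, X_1, ..., X_{2m} i.i.d. X-valued random variables. If m ≥ 4·ln(2)·((b-a)/ε)², then P(sup_{f∈F} |(1/m)∑_{i=1}^m f(X_i) − E[f(X)]| > ε) ≤ 2·P(sup_{f∈F} |(1/m)∑_{i=1}^m (f(X_i) − f(X_{m+i}))| > ε/2). -/

import Mathlib

open MeasureTheory Finset ProbabilityTheory
open scoped ENNReal

lemma cheb_aux {Ω : Type*} [MeasurableSpace Ω] (P : Measure Ω) [IsProbabilityMeasure P]
    {X : Type*} [MeasurableSpace X]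
    (a b : ℝ) (f : X → ℝ) (hfm : Measurable f) (hfab : ∀ x, f x ∈ Set.Icc a b)
    (Xs : ℕ → Ω → X) (hXmeas : ∀ i, Measurable (Xs i))
    (hXindep : ProbabilityTheory.iIndepFun Xs P)
    (hXid : ∀ i, P.map (Xs i) = P.map (Xs 0))
    (ε : ℝ) (hε : 0 < ε) (m : ℕ) (hm0 : 0 < m)
    (hmm : (b - a) ^ 2 / (m * ε ^ 2) ≤ 1 / 2) :
    P {ω | ε / 2 < |(1 / (m : ℝ)) * ∑ i ∈ Finset.Icc 1 m, f (Xs (m + i) ω)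
        - ∫ ω', f (Xs 0 ω') ∂P|} ≤ 1 / 2 := by
  have hmR : (0 : ℝ) < m := Nat.cast_pos.mpr hm0
  set T : Finset ℕ := (Finset.Icc 1 m).map ⟨fun i => m + i, add_right_injective m⟩ with hT
  have hTcard : T.card = m := by simp [hT]
  set Y : ℕ → Ω → ℝ := fun j ω => f (Xs j ω) with hY
  have hYmeas : ∀ j, Measurable (Y j) := fun j => hfm.comp (hXmeas j)
  have hYmem : ∀ j, MemLp (Y j) 2 P := fun j =>
    memLp_of_bounded (ae_of_all _ fun ω => hfab _) (hYmeas j).aestronglyMeasurable 2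
  set Ef : ℝ := ∫ ω', f (Xs 0 ω') ∂P with hEf
  have hEY : ∀ j, ∫ ω, Y j ω ∂P = Ef := by
    intro j
    calc ∫ ω, f (Xs j ω) ∂P = ∫ x, f x ∂(P.map (Xs j)) :=
          (integral_map (hXmeas j).aemeasurable hfm.aestronglyMeasurable).symm
      _ = ∫ x, f x ∂(P.map (Xs 0)) := by rw [hXid j]
      _ = Ef := integral_map (hXmeas 0).aemeasurable hfm.aestronglyMeasurable
  have hVar : variance (∑ j ∈ T, Y j) P = ∑ j ∈ T, variance (Y j) P :=
    IndepFun.variance_sum (fun j _ => hYmem j)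
      (fun i _ j _ hij => (hXindep.indepFun hij).comp hfm hfm)
  have hVarle : variance (∑ j ∈ T, Y j) P ≤ m * ((b - a) / 2) ^ 2 := by
    rw [hVar]
    calc ∑ j ∈ T, variance (Y j) P ≤ ∑ j ∈ T, ((b - a) / 2) ^ 2 :=
          Finset.sum_le_sum fun j _ =>
            variance_le_sq_of_bounded (ae_of_all _ fun ω => hfab _) (hYmeas j).aemeasurable
      _ = m * ((b - a) / 2) ^ 2 := by rw [Finset.sum_const, hTcard, nsmul_eq_mul]
  have hEZ : ∫ ω, (∑ j ∈ T, Y j) ω ∂P = m * Ef := by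
    simp only [Finset.sum_apply]
    rw [integral_finset_sum T (fun j _ => (hYmem j).integrable one_le_two)]
    simp [hEY, hTcard]
  have hc : (0 : ℝ) < (m : ℝ) * ε / 2 := by positivity
  have hcheb := meas_ge_le_variance_div_sq (μ := P)
    (memLp_finset_sum' T fun j _ => hYmem j) hc
  refine le_trans (le_trans (measure_mono ?_) hcheb) ?_
  · intro ω hω
    simp only [Set.mem_setOf_eq] at hω ⊢
    have hsum : (∑ j ∈ T, Y j) ω = ∑ i ∈ Finset.Icc 1 m, f (Xs (m + i) ω) := by
      simp [hT, Finset.sum_map, hY]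
    rw [hEZ, hsum]
    have key : |∑ i ∈ Finset.Icc 1 m, f (Xs (m + i) ω) - (m : ℝ) * Ef|
        = (m : ℝ) * |(1 / (m : ℝ)) * ∑ i ∈ Finset.Icc 1 m, f (Xs (m + i) ω) - Ef| := by
      rw [← abs_of_pos hmR, ← abs_mul]
      congr 1
      field_simp
      rw [abs_of_pos hmR]; ring
    rw [key]
    have := hω.le
    calc (m : ℝ) * ε / 2 = (m : ℝ) * (ε / 2) := by ring
      _ ≤ (m : ℝ) * |(1 / (m : ℝ)) * ∑ i ∈ Finset.Icc 1 m, f (Xs (m + i) ω) - Ef| := by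
          exact mul_le_mul_of_nonneg_left hω.le hmR.le
  · have hdiv : variance (∑ j ∈ T, Y j) P / ((m : ℝ) * ε / 2) ^ 2 ≤ 1 / 2 := by
      have h1 : variance (∑ j ∈ T, Y j) P / ((m : ℝ) * ε / 2) ^ 2
          ≤ ((m : ℝ) * ((b - a) / 2) ^ 2) / ((m : ℝ) * ε / 2) ^ 2 := by
        apply div_le_div_of_nonneg_right hVarle (by positivity) |>.trans_eq rfl
      refine h1.trans ?_
      have heq : ((m : ℝ) * ((b - a) / 2) ^ 2) / ((m : ℝ) * ε / 2) ^ 2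
          = (b - a) ^ 2 / ((m : ℝ) * ε ^ 2) := by
        field_simp
      rw [heq]; exact hmm
    calc ENNReal.ofReal (variance (∑ j ∈ T, Y j) P / ((m : ℝ) * ε / 2) ^ 2)
        ≤ ENNReal.ofReal (1 / 2) := ENNReal.ofReal_le_ofReal hdiv
      _ = 1 / 2 := by
          rw [ENNReal.ofReal_div_of_pos (by norm_num)]
          norm_num

open MeasureTheory Finset ProbabilityTheory



open MeasureTheory Finset

/-- **Symmetrization lemma.** For a countable class `F` of `[a,b]`-valued functions and an
i.i.d. sample `Xs 1, …, Xs (2m)` (all distributed as `Xs 0`), if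
`m ≥ 4 ln 2 ((b-a)/ε)²` then the probability that the empirical mean of some `f ∈ F`
deviates from its expectation by more than `ε` is at most twice the probability that
the empirical means over the sample and the ghost sample differ by more than `ε/2`. -/
theorem symmetrization
    {X : Type*} [MeasurableSpace X] {Ω : Type*} [MeasurableSpace Ω]
    (P : Measure Ω) [IsProbabilityMeasure P]
    (a b : ℝ) (hab : a < b)
    (F : Set (X → ℝ)) (hFcount : F.Countable)
    (hFmeas : ∀ f ∈ F, Measurable f)
    (hFab : ∀ f ∈ F, ∀ x, f x ∈ Set.Icc a b)
    (Xs : ℕ → Ω → X)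
    (hXmeas : ∀ i, Measurable (Xs i))
    (hXindep : ProbabilityTheory.iIndepFun Xs P)
    (hXid : ∀ i, P.map (Xs i) = P.map (Xs 0))
    (ε : ℝ) (hε : 0 < ε) (m : ℕ)
    (hm : 4 * Real.log 2 * ((b - a) / ε) ^ 2 ≤ (m : ℝ)) :
    P {ω | ∃ f ∈ F,
        ε < |(1 / (m : ℝ)) * ∑ i ∈ Finset.Icc 1 m, f (Xs i ω) - ∫ ω', f (Xs 0 ω') ∂P|}
      ≤ 2 * P {ω | ∃ f ∈ F,
        ε / 2 < |(1 / (m : ℝ)) * ∑ i ∈ Finset.Icc 1 m, (f (Xs i ω) - f (Xs (m + i) ω))|} := by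
  classical
  rcases F.eq_empty_or_nonempty with hFe | hFne
  · simp [hFe]
  obtain ⟨g, hg⟩ := Set.Countable.exists_eq_range hFcount hFne
  have hgmem : ∀ n, g n ∈ F := fun n => hg ▸ Set.mem_range_self n
  have hgmeas : ∀ n, Measurable (g n) := fun n => hFmeas _ (hgmem n)
  have hgab : ∀ n x, g n x ∈ Set.Icc a b := fun n => hFab _ (hgmem n)
  -- numerics
  have hba : 0 < b - a := sub_pos.mpr hab
  have hmpos : (0 : ℝ) < m := lt_of_lt_of_le
    (mul_pos (mul_pos four_pos (Real.log_pos one_lt_two))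
      (pow_pos (div_pos hba hε) 2)) hm
  have hm0 : 0 < m := Nat.cast_pos.mp hmpos
  have hmm : (b - a) ^ 2 / ((m : ℝ) * ε ^ 2) ≤ 1 / 2 := by
    have hlog : (1 : ℝ) / 2 ≤ Real.log 2 := by
      have := Real.log_two_gt_d9
      linarith
    have h2 : 2 * ((b - a) / ε) ^ 2 ≤ (m : ℝ) := by nlinarith [sq_nonneg ((b - a) / ε)]
    rw [div_le_iff₀ (by positivity)]
    rw [div_pow] at h2
    have hεsq : (0 : ℝ) < ε ^ 2 := by positivity
    have h3 : 2 * (b - a) ^ 2 ≤ (m : ℝ) * ε ^ 2 := by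
      have h4 := mul_le_mul_of_nonneg_right h2 hεsq.le
      calc 2 * (b - a) ^ 2 = 2 * ((b - a) ^ 2 / ε ^ 2) * ε ^ 2 := by field_simp
        _ ≤ (m : ℝ) * ε ^ 2 := h4
    linarith
  -- notation
  set Ef : ℕ → ℝ := fun n => ∫ ω', g n (Xs 0 ω') ∂P with hEf
  set D : ℕ → Ω → Prop := fun n ω =>
    ε < |(1 / (m : ℝ)) * ∑ i ∈ Finset.Icc 1 m, g n (Xs i ω) - Ef n| with hD
  set A : ℕ → Set Ω := fun n => {ω | D n ω ∧ ∀ k < n, ¬ D k ω} with hA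
  set C : ℕ → Set Ω := fun n =>
    {ω | |(1 / (m : ℝ)) * ∑ i ∈ Finset.Icc 1 m, g n (Xs (m + i) ω) - Ef n| ≤ ε / 2} with hC
  -- tuple maps and independence
  set S : Finset ℕ := Finset.Icc 1 m with hS
  set T : Finset ℕ := S.map ⟨fun i => m + i, add_right_injective m⟩ with hT
  have hST : Disjoint S T := by
    rw [Finset.disjoint_left]
    rintro x hx hx'
    simp only [hS, hT, Finset.mem_map, Finset.mem_Icc, Function.Embedding.coeFn_mk] at hx hx'
    omega
  set φ : Ω → ((i : S) → X) := fun ω i => Xs i ω with hφ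
  set ψ : Ω → ((j : T) → X) := fun ω j => Xs j ω with hψ
  have hφmeas : Measurable φ := measurable_pi_lambda _ fun i => hXmeas i
  have hψmeas : Measurable ψ := measurable_pi_lambda _ fun j => hXmeas j
  have hIndep : IndepFun φ ψ P := hXindep.indepFun_finset S T hST hXmeas
  set G1 : ℕ → ((i : S) → X) → ℝ :=
    fun n x => (1 / (m : ℝ)) * ∑ i ∈ S.attach, g n (x i) with hG1d
  set G2 : ℕ → ((j : T) → X) → ℝ :=
    fun n y => (1 / (m : ℝ)) * ∑ j ∈ T.attach, g n (y j) with hG2d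
  have hG1 : ∀ n ω, G1 n (φ ω) = (1 / (m : ℝ)) * ∑ i ∈ Finset.Icc 1 m, g n (Xs i ω) := by
    intro n ω
    simp only [hG1d, hφ]
    rw [Finset.sum_attach S (fun i => g n (Xs i ω))]
  have hG2 : ∀ n ω, G2 n (ψ ω) = (1 / (m : ℝ)) * ∑ i ∈ Finset.Icc 1 m, g n (Xs (m + i) ω) := by
    intro n ω
    simp only [hG2d, hψ]
    rw [Finset.sum_attach T (fun j => g n (Xs j ω)), hT, Finset.sum_map]
    rfl
  have hG1meas : ∀ n, Measurable (G1 n) := fun n =>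
    measurable_const.mul (Finset.measurable_sum _ fun i _ =>
      (hgmeas n).comp (measurable_pi_apply i))
  have hG2meas : ∀ n, Measurable (G2 n) := fun n =>
    measurable_const.mul (Finset.measurable_sum _ fun j _ =>
      (hgmeas n).comp (measurable_pi_apply j))
  set U : ℕ → Set ((i : S) → X) := fun n =>
    {x | (ε < |G1 n x - Ef n|) ∧ ∀ k < n, ¬ (ε < |G1 k x - Ef k|)} with hU
  set V : ℕ → Set ((j : T) → X) := fun n => {y | |G2 n y - Ef n| ≤ ε / 2} with hV
  have hUmeas : ∀ n, MeasurableSet (U n) := by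
    intro n
    have h1 : ∀ k, MeasurableSet {x : (i : S) → X | ε < |G1 k x - Ef k|} := fun k =>
      measurableSet_lt measurable_const ((hG1meas k).sub measurable_const).abs
    have heq : U n = {x | ε < |G1 n x - Ef n|} ∩
        ⋂ k ∈ Finset.range n, {x : (i : S) → X | ε < |G1 k x - Ef k|}ᶜ := by
      ext x
      simp [hU, Finset.mem_range]
    rw [heq]
    exact (h1 n).inter (MeasurableSet.biInter (Finset.range n).countable_toSet
      fun k _ => (h1 k).compl)
  have hVmeas : ∀ n, MeasurableSet (V n) :=
    fun n => measurableSet_le ((hG2meas n).sub measurable_const).abs measurable_const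
  have hAU : ∀ n, A n = φ ⁻¹' U n := by
    intro n
    ext ω
    simp only [hA, hU, Set.mem_setOf_eq, Set.mem_preimage, hG1, hD, hS]
  have hCV : ∀ n, C n = ψ ⁻¹' V n := by
    intro n
    ext ω
    simp only [hC, hV, Set.mem_setOf_eq, Set.mem_preimage, hG2, hS]
  have hAmeas : ∀ n, MeasurableSet (A n) := fun n => (hAU n) ▸ hφmeas (hUmeas n)
  have hCmeas : ∀ n, MeasurableSet (C n) := fun n => (hCV n) ▸ hψmeas (hVmeas n)
  -- Chebyshev bound on the complement of C n
  have hCc : ∀ n, P (C n)ᶜ ≤ 1 / 2 := by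
    intro n
    have hset : (C n)ᶜ = {ω | ε / 2 <
        |(1 / (m : ℝ)) * ∑ i ∈ Finset.Icc 1 m, g n (Xs (m + i) ω) - Ef n|} := by
      ext ω
      simp [hC, not_le, hS]
    rw [hset]
    exact cheb_aux P a b (g n) (hgmeas n) (hgab n) Xs hXmeas hXindep hXid ε hε m hm0 hmm
  have hChalf : ∀ n, (2 : ℝ≥0∞)⁻¹ ≤ P (C n) := by
    intro n
    have h1 : (1 : ℝ≥0∞) - P (C n) ≤ 1 / 2 := by
      rw [← prob_compl_eq_one_sub (hCmeas n)]
      exact hCc n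
    have h2 : (1 : ℝ≥0∞) ≤ 1 / 2 + P (C n) := tsub_le_iff_right.mp h1
    have h3 : (1 : ℝ≥0∞) / 2 + 1 / 2 ≤ 1 / 2 + P (C n) := by
      calc (1 : ℝ≥0∞) / 2 + 1 / 2 = 1 := ENNReal.add_halves 1
        _ ≤ 1 / 2 + P (C n) := h2
    have h4 := (ENNReal.add_le_add_iff_left (by norm_num : (1 : ℝ≥0∞) / 2 ≠ ⊤)).mp h3
    simpa [one_div] using h4
  have hmul : ∀ n, P (A n ∩ C n) = P (A n) * P (C n) := by
    intro n
    rw [hAU n, hCV n]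
    exact hIndep.measure_inter_preimage_eq_mul _ _ (hUmeas n) (hVmeas n)
  have hAle : ∀ n, P (A n) ≤ 2 * P (A n ∩ C n) := by
    intro n
    calc P (A n) = 2 * (2⁻¹ * P (A n)) := by
          rw [← mul_assoc, ENNReal.mul_inv_cancel (by norm_num) (by norm_num), one_mul]
      _ ≤ 2 * (P (C n) * P (A n)) :=
          mul_le_mul_right (mul_le_mul_left (hChalf n) _) 2
      _ = 2 * P (A n ∩ C n) := by rw [hmul n]; ring
  -- disjointness
  have hkey : ∀ i j, i < j → Disjoint (A i) (A j) := fun i j hij =>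
    Set.disjoint_left.mpr fun ω hωi hωj => hωj.2 i hij hωi.1
  have hdisj : Pairwise (Function.onFun Disjoint A) := fun i j hij =>
    hij.lt_or_gt.elim (hkey i j) fun h => (hkey j i h).symm
  have hdisj' : Pairwise (Function.onFun Disjoint (fun n => A n ∩ C n)) := fun i j hij =>
    ((hdisj hij).mono Set.inter_subset_left Set.inter_subset_left)
  -- identify the LHS set
  have hLHS : {ω | ∃ f ∈ F,
      ε < |(1 / (m : ℝ)) * ∑ i ∈ Finset.Icc 1 m, f (Xs i ω) - ∫ ω', f (Xs 0 ω') ∂P|}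
      = ⋃ n, A n := by
    ext ω
    simp only [Set.mem_setOf_eq, Set.mem_iUnion, hg, Set.mem_range, hA]
    constructor
    · rintro ⟨f, ⟨n, rfl⟩, hf⟩
      have hex : ∃ k, D k ω := ⟨n, hf⟩
      exact ⟨Nat.find hex, Nat.find_spec hex, fun k hk => Nat.find_min hex hk⟩
    · rintro ⟨n, hn, -⟩
      exact ⟨g n, ⟨n, rfl⟩, hn⟩
  -- the union of A n ∩ C n is inside the RHS set
  have hsubB : ∀ n, A n ∩ C n ⊆ {ω | ∃ f ∈ F,
      ε / 2 < |(1 / (m : ℝ)) * ∑ i ∈ Finset.Icc 1 m, (f (Xs i ω) - f (Xs (m + i) ω))|} := by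
    rintro n ω ⟨hωA, hωC⟩
    refine ⟨g n, hgmem n, ?_⟩
    have hDn : ε < |(1 / (m : ℝ)) * ∑ i ∈ Finset.Icc 1 m, g n (Xs i ω) - Ef n| := hωA.1
    have hCn : |(1 / (m : ℝ)) * ∑ i ∈ Finset.Icc 1 m, g n (Xs (m + i) ω) - Ef n| ≤ ε / 2 := hωC
    have hrw : (1 / (m : ℝ)) * ∑ i ∈ Finset.Icc 1 m, (g n (Xs i ω) - g n (Xs (m + i) ω))
        = ((1 / (m : ℝ)) * ∑ i ∈ Finset.Icc 1 m, g n (Xs i ω))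
          - ((1 / (m : ℝ)) * ∑ i ∈ Finset.Icc 1 m, g n (Xs (m + i) ω)) := by
      rw [Finset.sum_sub_distrib, mul_sub]
    rw [hrw]
    have habs := abs_sub_abs_le_abs_sub
      ((1 / (m : ℝ)) * ∑ i ∈ Finset.Icc 1 m, g n (Xs i ω) - Ef n)
      ((1 / (m : ℝ)) * ∑ i ∈ Finset.Icc 1 m, g n (Xs (m + i) ω) - Ef n)
    have heq2 : ((1 / (m : ℝ)) * ∑ i ∈ Finset.Icc 1 m, g n (Xs i ω) - Ef n)
        - ((1 / (m : ℝ)) * ∑ i ∈ Finset.Icc 1 m, g n (Xs (m + i) ω) - Ef n)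
        = ((1 / (m : ℝ)) * ∑ i ∈ Finset.Icc 1 m, g n (Xs i ω))
          - ((1 / (m : ℝ)) * ∑ i ∈ Finset.Icc 1 m, g n (Xs (m + i) ω)) := by ring
    rw [heq2] at habs
    linarith
  -- conclusion
  calc P {ω | ∃ f ∈ F,
        ε < |(1 / (m : ℝ)) * ∑ i ∈ Finset.Icc 1 m, f (Xs i ω) - ∫ ω', f (Xs 0 ω') ∂P|}
      = P (⋃ n, A n) := by rw [hLHS]
    _ = ∑' n, P (A n) := measure_iUnion hdisj hAmeas
    _ ≤ ∑' n, 2 * P (A n ∩ C n) := ENNReal.tsum_le_tsum hAle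
    _ = 2 * ∑' n, P (A n ∩ C n) := ENNReal.tsum_mul_left
    _ = 2 * P (⋃ n, A n ∩ C n) := by
        rw [measure_iUnion hdisj' fun n => (hAmeas n).inter (hCmeas n)]
    _ ≤ 2 * P {ω | ∃ f ∈ F,
        ε / 2 < |(1 / (m : ℝ)) * ∑ i ∈ Finset.Icc 1 m, (f (Xs i ω) - f (Xs (m + i) ω))|} :=
        mul_le_mul_right (measure_mono (Set.iUnion_subset hsubB)) 2
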